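/- (Linear-algebra form of the taming lemma for fibered almost complex structures.) Let V and W be finite-dimensional real vector spaces, ω_F an alternating bilinear form on V taming a complex structure J_F on V, ω_B an alternating bilinear form on W taming a complex structure J_B on W, X : W → V a linear map, K > 0 a real number, and κ an alternating bilinear form on W satisfying |κ(w, J_B w)| < K·ω_B(w, J_B w) for all w ≠ 0. Define the complex structure J on V ⊕ W by J(v, w) = (J_F v + (J_F∘X − X∘J_B)(w), J_B w), and the alternating bilinear form Ω on V ⊕ W by Ω((v₁,w₁),(v₂,w₂)) = ω_F(v₁ + X w₁, v₂ + X w₂) + κ(w₁,w₂) + K·ω_B(w₁,w₂). Then Ω tames J, i.e. Ω(u, J u) > 0 for every nonzero u ∈ V ⊕ W. -/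

import Mathlib

/-! With `u = v + X w`, the first argument of `J(v, w)` shifted by `X (J_B w)` is `J_F u`, so
`Ω((v, w), J(v, w)) = ω_F(u, J_F u) + (κ(w, J_B w) + K ω_B(w, J_B w))`. The first summand is
nonnegative and positive when `w = 0` (then `u = v ≠ 0`); the second vanishes at `w = 0` and is
positive otherwise, by the curvature bound. -/

section Taming

variable {R M : Type*} [CommRing R] [PartialOrder R] [AddCommGroup M] [Module R M]

def Tames (ω : M →ₗ[R] M →ₗ[R] R) (J : M →ₗ[R] M) : Prop :=
  ∀ v : M, v ≠ 0 → 0 < ω v (J v)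

theorem Tames.nonneg {ω : M →ₗ[R] M →ₗ[R] R} {J : M →ₗ[R] M} (h : Tames ω J) (v : M) :
    0 ≤ ω v (J v) := by
  by_cases hv : v = 0
  · simp [hv]
  · exact (h v hv).le

end Taming

theorem fibered_acs_fst_add_shift {R V W : Type*} [Ring R] [AddCommGroup V] [Module R V]
    [AddCommGroup W] [Module R W] (JF : V →ₗ[R] V) (JB : W →ₗ[R] W) (X : W →ₗ[R] V)
    (v : V) (w : W) :
    (JF v + (JF (X w) - X (JB w))) + X (JB w) = JF (v + X w) := by
  rw [map_add]
  abel

theorem pos_add_of_abs_lt {a b : ℝ} (h : |a| < b) : 0 < a + b := by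
  linarith [neg_abs_le a]

theorem weak_coupling_form_tames_fibered_acs_general
    {V W : Type*} [AddCommGroup V] [Module ℝ V]
    [AddCommGroup W] [Module ℝ W]
    (ωF : V →ₗ[ℝ] V →ₗ[ℝ] ℝ)
    (ωB : W →ₗ[ℝ] W →ₗ[ℝ] ℝ)
    (JF : V →ₗ[ℝ] V)
    (JB : W →ₗ[ℝ] W)
    (htamF : ∀ v : V, v ≠ 0 → 0 < ωF v (JF v))
    (X : W →ₗ[ℝ] V) (K : ℝ)
    (κ : W →ₗ[ℝ] W →ₗ[ℝ] ℝ)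
    (hκ : ∀ w : W, w ≠ 0 → |κ w (JB w)| < K * ωB w (JB w)) :
    ∀ (v : V) (w : W), (v, w) ≠ ((0 : V), (0 : W)) →
      0 < ωF (v + X w) ((JF v + (JF (X w) - X (JB w))) + X (JB w)) +
          κ w (JB w) + K * ωB w (JB w) := by
  intro v w hvw
  have hF : Tames ωF JF := htamF
  rw [fibered_acs_fst_add_shift, add_assoc]
  by_cases hw : w = 0
  · subst hw
    have hv : v ≠ 0 := by simpa using hvw
    simpa using hF v hv
  · exact add_pos_of_nonneg_of_pos (hF.nonneg _) (pos_add_of_abs_lt (hκ w hw))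

/-- Linear-algebra form of the taming lemma for fibered almost complex structures:
if `ω_F` tames `J_F` on the vertical space `V`, `ω_B` tames `J_B` on the horizontal
space `W`, and the curvature form `κ` satisfies `|κ(w, J_B w)| < K·ω_B(w, J_B w)` for
`w ≠ 0`, then the weak coupling form
`Ω((v₁,w₁),(v₂,w₂)) = ω_F(v₁ + X w₁, v₂ + X w₂) + κ(w₁,w₂) + K·ω_B(w₁,w₂)`
tames the fibered complex structure
`J(v,w) = (J_F v + (J_F∘X − X∘J_B)(w), J_B w)` on `V ⊕ W`. -/
theorem weak_coupling_form_tames_fibered_acs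
    {V W : Type*} [AddCommGroup V] [Module ℝ V] [FiniteDimensional ℝ V]
    [AddCommGroup W] [Module ℝ W] [FiniteDimensional ℝ W]
    (ωF : V →ₗ[ℝ] V →ₗ[ℝ] ℝ) (hωFalt : ∀ v : V, ωF v v = 0)
    (ωB : W →ₗ[ℝ] W →ₗ[ℝ] ℝ) (hωBalt : ∀ w : W, ωB w w = 0)
    (JF : V →ₗ[ℝ] V) (hJF : ∀ v : V, JF (JF v) = -v)
    (JB : W →ₗ[ℝ] W) (hJB : ∀ w : W, JB (JB w) = -w)
    (htamF : ∀ v : V, v ≠ 0 → 0 < ωF v (JF v))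
    (htamB : ∀ w : W, w ≠ 0 → 0 < ωB w (JB w))
    (X : W →ₗ[ℝ] V) (K : ℝ) (hK : 0 < K)
    (κ : W →ₗ[ℝ] W →ₗ[ℝ] ℝ) (hκalt : ∀ w : W, κ w w = 0)
    (hκ : ∀ w : W, w ≠ 0 → |κ w (JB w)| < K * ωB w (JB w)) :
    ∀ (v : V) (w : W), (v, w) ≠ ((0 : V), (0 : W)) →
      0 < ωF (v + X w) ((JF v + (JF (X w) - X (JB w))) + X (JB w)) +
          κ w (JB w) + K * ωB w (JB w) :=
  weak_coupling_form_tames_fibered_acs_general ωF ωB JF JB htamF X K κ hκ
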